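/- Let φ ∈ E satisfy the first law with temperature 𝒯 > 0 and potentials Y_1, …, Y_p. Suppose u, w ∈ E are such that DM_φ(u) = DX^i_φ(u) = 0 for all i, D²M_φ(u,u) + DM_φ(w) = 0, D²X^i_φ(u,u) + DX^i_φ(w) = 0 for all i, and D²S_φ(u,u) + DS_φ(w) > 0 (i.e., the second-order variation φ + t·u + (t²/2)·w keeps M and all X^i fixed to first and second order while increasing S at second order). Then B_φ(u,u) < 0. -/
import Mathlib


open Filter Topology

/-- The second Fréchet derivative of `f : E → ℝ` at `φ`, applied to `u`, `v`. -/
noncomputable def D2 {E : Type*} [NormedAddCommGroup E] [NormedSpace ℝ E]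
    (f : E → ℝ) (φ u v : E) : ℝ :=
  fderiv ℝ (fderiv ℝ f) φ u v

/-- `φ` satisfies the first law with temperature `T` and potentials `Y i`:
`DM_φ = T·DS_φ + ∑ i, Y i · DX^i_φ` as continuous linear functionals. -/
def FirstLaw {E : Type*} [NormedAddCommGroup E] [NormedSpace ℝ E] {p : ℕ}
    (M S : E → ℝ) (X : Fin p → E → ℝ) (φ : E) (T : ℝ) (Y : Fin p → ℝ) : Prop :=
  fderiv ℝ M φ = T • fderiv ℝ S φ + ∑ i, Y i • fderiv ℝ (X i) φ

/-- The canonical bilinear form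
`B_φ(u,v) = D²M_φ(u,v) − T·D²S_φ(u,v) − ∑ i, Y i·D²X^i_φ(u,v)`. -/
noncomputable def Bform {E : Type*} [NormedAddCommGroup E] [NormedSpace ℝ E] {p : ℕ}
    (M S : E → ℝ) (X : Fin p → E → ℝ) (φ : E) (T : ℝ) (Y : Fin p → ℝ) (u v : E) : ℝ :=
  D2 M φ u v - T * D2 S φ u v - ∑ i, Y i * D2 (X i) φ u v

/-- If `φ` satisfies the first law with `T > 0`, and `u, w` give a second-order
variation `φ + t·u + (t²/2)·w` keeping `M` and all `X^i` fixed to first and second order while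
increasing `S` at second order, then `B_φ(u,u) < 0`. -/
theorem Bform_neg_of_entropy_increase
    {E : Type*} [NormedAddCommGroup E] [NormedSpace ℝ E] [CompleteSpace E]
    {p : ℕ} (M S : E → ℝ) (X : Fin p → E → ℝ)
    (hM : ContDiff ℝ (⊤ : ℕ∞) M) (hS : ContDiff ℝ (⊤ : ℕ∞) S)
    (hX : ∀ i, ContDiff ℝ (⊤ : ℕ∞) (X i))
    (φ : E) (T : ℝ) (hT : 0 < T) (Y : Fin p → ℝ) (hfl : FirstLaw M S X φ T Y)
    (u w : E)
    (hMu : fderiv ℝ M φ u = 0) (hXu : ∀ i, fderiv ℝ (X i) φ u = 0)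
    (hM2 : D2 M φ u u + fderiv ℝ M φ w = 0)
    (hX2 : ∀ i, D2 (X i) φ u u + fderiv ℝ (X i) φ w = 0)
    (hS2 : 0 < D2 S φ u u + fderiv ℝ S φ w) :
    Bform M S X φ T Y u u < 0 := by
  have hw : fderiv ℝ M φ w = T * fderiv ℝ S φ w + ∑ i, Y i * fderiv ℝ (X i) φ w := by
    have := congrArg (fun L : E →L[ℝ] ℝ => L w) hfl
    simpa [ContinuousLinearMap.add_apply, ContinuousLinearMap.smul_apply,
      ContinuousLinearMap.sum_apply, smul_eq_mul] using this
  have hB : Bform M S X φ T Y u u = -T * (D2 S φ u u + fderiv ℝ S φ w) := by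
    unfold Bform
    have h1 : D2 M φ u u = -(fderiv ℝ M φ w) := by linarith
    have h2 : ∀ i, D2 (X i) φ u u = -(fderiv ℝ (X i) φ w) := fun i => by
      have := hX2 i; linarith
    rw [h1, hw]
    simp only [h2]
    rw [Finset.sum_congr rfl (fun i _ => by ring :
      ∀ i ∈ Finset.univ, Y i * -(fderiv ℝ (X i) φ w) = -(Y i * fderiv ℝ (X i) φ w)),
      Finset.sum_neg_distrib]
    ring
  rw [hB]
  nlinarith
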